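/- For all f ∈ H^s, all integers k ≠ 0, and all 1 ≤ j ≤ s: |I_k(f) − I_k(p_{f,j})| ≤ ‖f‖_{H^s}/(2π|k|)^j, where p_{f,j}(x) = ∑_{m=0}^{j−1}(f^{(m)}(1)−f^{(m)}(0))B*_{m+1}(x) is the Bernoulli periodization and I_k(p_{f,j}) = −∑_{ℓ=0}^{j−1}(f^{(ℓ)}(1)−f^{(ℓ)}(0))/(2πik)^{ℓ+1}. -/

import Mathlib

open MeasureTheory Real Complex

noncomputable section

/-- The oscillatory integral `I_k(f) = ∫₀¹ f(x) e^{-2πikx} dx`. -/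
def Ik (k : ℤ) (f : ℝ → ℂ) : ℂ :=
  ∫ x in (0:ℝ)..1, f x * Complex.exp (-(2 * Real.pi * Complex.I * (k : ℂ) * (x : ℂ)))

/-- The normalized Bernoulli polynomial `B*_ℓ = B_ℓ/ℓ!` as a function `ℝ → ℂ`. -/
def Bstar (ℓ : ℕ) (x : ℝ) : ℂ :=
  ((Polynomial.bernoulli ℓ).map (algebraMap ℚ ℂ)).eval (x : ℂ) / (Nat.factorial ℓ)

/-- The `Hˢ` inner product
`⟨f,g⟩_s = ∑_{ℓ<s} (∫₀¹ f⁽ℓ⁾)·conj(∫₀¹ g⁽ℓ⁾) + ∫₀¹ f⁽ˢ⁾ conj(g⁽ˢ⁾)`. -/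
def hsInner (s : ℕ) (f g : ℝ → ℂ) : ℂ :=
  (∑ ℓ ∈ Finset.range s,
    (∫ x in (0:ℝ)..1, iteratedDeriv ℓ f x) *
      (starRingEnd ℂ) (∫ x in (0:ℝ)..1, iteratedDeriv ℓ g x)) +
  ∫ x in (0:ℝ)..1, iteratedDeriv s f x * (starRingEnd ℂ) (iteratedDeriv s g x)

/-- The squared `Hˢ` norm. -/
def hsNormSq (s : ℕ) (f : ℝ → ℂ) : ℝ :=
  (∑ ℓ ∈ Finset.range s, ‖∫ x in (0:ℝ)..1, iteratedDeriv ℓ f x‖^2) +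
  ∫ x in (0:ℝ)..1, ‖iteratedDeriv s f x‖^2

/-- The Bernoulli periodization polynomial
`p_{f,j}(x) = ∑_{m<j} (f⁽ᵐ⁾(1) - f⁽ᵐ⁾(0)) B*_{m+1}(x)`. -/
def periodization (f : ℝ → ℂ) (j : ℕ) (x : ℝ) : ℂ :=
  ∑ m ∈ Finset.range j, (iteratedDeriv m f 1 - iteratedDeriv m f 0) * Bstar (m+1) x

/-! Integrating by parts `j` times against `e^{-2πikx}` gives
`I_k(f) = I_k(p_{f,j}) + I_k(f⁽ʲ⁾)/(2πik)ʲ`, since `I_k(B*_{m+1}) = -(2πik)^{-(m+1)}` is the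
classical Fourier coefficient of a Bernoulli polynomial. It remains to show
`|I_k(f⁽ᵗ⁾)| ≤ ‖f‖_{Hˢ}` for `t ≤ s`, by downward induction on `t`: for `t = s` this is
`‖·‖_{L¹} ≤ ‖·‖_{L²}` on `[0,1]`, and one more integration by parts bounds `|I_k(f⁽ᵗ⁾)|` by
`(|I_k(f⁽ᵗ⁺¹⁾)| + |∫₀¹ f⁽ᵗ⁺¹⁾|)/(2π|k|) ≤ 2‖f‖_{Hˢ}/(2π) ≤ ‖f‖_{Hˢ}`. -/

theorem Ik_eq_fourierCoeffOn (k : ℤ) (f : ℝ → ℂ) :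
    Ik k f = fourierCoeffOn zero_lt_one f k := by
  rw [fourierCoeffOn_eq_integral, Ik]
  simp only [sub_zero, div_one, one_smul, smul_eq_mul]
  congr 1 with x
  rw [fourier_coe_apply, mul_comm]
  congr 2
  push_cast
  ring

theorem Ik_eq_of_hasDerivAt {k : ℤ} (hk : k ≠ 0) {g g' : ℝ → ℂ}
    (hg : ∀ x ∈ Set.uIcc (0 : ℝ) 1, HasDerivAt g (g' x) x)
    (hg' : IntervalIntegrable g' volume 0 1) :
    Ik k g = (Ik k g' - (g 1 - g 0)) / (2 * π * I * k) := by
  rw [Ik_eq_fourierCoeffOn, Ik_eq_fourierCoeffOn,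
    fourierCoeffOn_of_hasDerivAt zero_lt_one hk (by simpa using hg) (by simpa using hg')]
  simp only [QuotientAddGroup.mk_zero, fourier_eval_zero, Complex.ofReal_one, Complex.ofReal_zero,
    sub_zero, one_mul]
  field_simp
  ring

theorem ContDiff.hasDerivAt_iteratedDeriv {n : ℕ} {f : ℝ → ℂ} (hf : ContDiff ℝ (n + 1) f)
    (x : ℝ) : HasDerivAt (iteratedDeriv n f) (iteratedDeriv (n + 1) f x) x := by
  rw [iteratedDeriv_succ]
  exact (hf.differentiable_iteratedDeriv' n x).hasDerivAt

theorem Ik_iteratedDeriv_eq {k : ℤ} (hk : k ≠ 0) {n : ℕ} {f : ℝ → ℂ}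
    (hf : ContDiff ℝ (n + 1) f) :
    Ik k (iteratedDeriv n f) =
      (Ik k (iteratedDeriv (n + 1) f) - (iteratedDeriv n f 1 - iteratedDeriv n f 0)) /
        (2 * π * I * k) :=
  Ik_eq_of_hasDerivAt hk (fun x _ => hf.hasDerivAt_iteratedDeriv x)
    ((hf.continuous_iteratedDeriv' _).intervalIntegrable _ _)

theorem integral_iteratedDeriv_succ {n : ℕ} {f : ℝ → ℂ} (hf : ContDiff ℝ (n + 1) f) :
    ∫ x in (0 : ℝ)..1, iteratedDeriv (n + 1) f x = iteratedDeriv n f 1 - iteratedDeriv n f 0 :=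
  intervalIntegral.integral_eq_sub_of_hasDerivAt (fun x _ => hf.hasDerivAt_iteratedDeriv x)
    ((hf.continuous_iteratedDeriv' _).intervalIntegrable _ _)

theorem Ik_eq_sum_add_Ik_iteratedDeriv {k : ℤ} (hk : k ≠ 0) {n : ℕ} {f : ℝ → ℂ}
    (hf : ContDiff ℝ n f) :
    Ik k f = -(∑ ℓ ∈ Finset.range n,
        (iteratedDeriv ℓ f 1 - iteratedDeriv ℓ f 0) / (2 * π * I * k) ^ (ℓ + 1)) +
      Ik k (iteratedDeriv n f) / (2 * π * I * k) ^ n := by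
  induction n with
  | zero => simp
  | succ n ih =>
    have hc : (2 * π * I * k : ℂ) ≠ 0 := by simp [hk, pi_ne_zero]
    rw [ih (hf.of_le (by norm_cast; omega)), Ik_iteratedDeriv_eq hk hf, Finset.sum_range_succ]
    field_simp
    ring

theorem Bstar_eq_bernoulliFun (n : ℕ) (x : ℝ) : Bstar n x = bernoulliFun n x / n.factorial := by
  simp only [Bstar, bernoulliFun, Polynomial.eval_map_algebraMap, ← Complex.coe_algebraMap,
    Polynomial.aeval_algebraMap_apply]

theorem Ik_Bstar (k : ℤ) {n : ℕ} (hn : n ≠ 0) : Ik k (Bstar n) = -1 / (2 * π * I * k) ^ n := by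
  have h := bernoulliFourierCoeff_eq hn k
  rw [bernoulliFourierCoeff, ← Ik_eq_fourierCoeffOn] at h
  simp only [Ik, Bstar_eq_bernoulliFun, div_mul_eq_mul_div, intervalIntegral.integral_div] at h ⊢
  rw [h, neg_div, neg_div, div_div, div_mul_cancel_right₀ (Nat.cast_ne_zero.2 n.factorial_ne_zero),
    neg_div, one_div]

theorem Ik_periodization (k : ℤ) (f : ℝ → ℂ) (j : ℕ) :
    Ik k (periodization f j) = -∑ ℓ ∈ Finset.range j,
      (iteratedDeriv ℓ f 1 - iteratedDeriv ℓ f 0) / (2 * π * I * k) ^ (ℓ + 1) := by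
  have hBstar (m : ℕ) : Continuous (Bstar m) := by unfold Bstar; fun_prop
  simp only [Ik, periodization, Finset.sum_mul, mul_assoc (iteratedDeriv _ f 1 - _)]
  rw [intervalIntegral.integral_finsetSum fun m _ => by
      exact (continuous_const.mul ((hBstar _).mul (by fun_prop))).intervalIntegrable _ _,
    ← Finset.sum_neg_distrib]
  refine Finset.sum_congr rfl fun m _ => ?_
  rw [intervalIntegral.integral_const_mul]
  change _ * Ik k (Bstar (m + 1)) = _
  rw [Ik_Bstar k (n := m + 1) (by omega)]
  ring

theorem sq_intervalIntegral_le_integral_sq {g : ℝ → ℝ} (hg : Continuous g) :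
    (∫ x in (0 : ℝ)..1, g x) ^ 2 ≤ ∫ x in (0 : ℝ)..1, g x ^ 2 := by
  set a := ∫ x in (0 : ℝ)..1, g x
  have hvar : 0 ≤ ∫ x in (0 : ℝ)..1, (g x - a) ^ 2 :=
    intervalIntegral.integral_nonneg zero_le_one fun _ _ => sq_nonneg _
  have hexpand : ∫ x in (0 : ℝ)..1, (g x - a) ^ 2 = (∫ x in (0 : ℝ)..1, g x ^ 2) - a ^ 2 := by
    simp only [sub_sq]
    rw [intervalIntegral.integral_add, intervalIntegral.integral_sub,
      intervalIntegral.integral_mul_const, intervalIntegral.integral_const_mul]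
    · simp only [intervalIntegral.integral_const, sub_zero, smul_eq_mul, one_mul]
      ring
    all_goals exact (by fun_prop : Continuous _).intervalIntegrable _ _
  linarith

theorem norm_intervalIntegral_le_sqrt_integral_norm_sq {g : ℝ → ℂ} (hg : Continuous g) :
    ‖∫ x in (0 : ℝ)..1, g x‖ ≤ √(∫ x in (0 : ℝ)..1, ‖g x‖ ^ 2) :=
  (intervalIntegral.norm_integral_le_integral_norm zero_le_one).trans
    (Real.le_sqrt_of_sq_le (sq_intervalIntegral_le_integral_sq hg.norm))

theorem norm_Ik_le_sqrt_integral_norm_sq (k : ℤ) {g : ℝ → ℂ} (hg : Continuous g) :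
    ‖Ik k g‖ ≤ √(∫ x in (0 : ℝ)..1, ‖g x‖ ^ 2) := by
  have hexp (x : ℝ) : ‖Complex.exp (-(2 * π * I * k * x))‖ = 1 := by simp [Complex.norm_exp]
  simpa only [Ik, norm_mul, hexp, mul_one] using
    norm_intervalIntegral_le_sqrt_integral_norm_sq
      (g := fun x => g x * Complex.exp (-(2 * π * I * k * x))) (by fun_prop)

theorem integral_norm_sq_iteratedDeriv_le_hsNormSq (s : ℕ) (f : ℝ → ℂ) :
    ∫ x in (0 : ℝ)..1, ‖iteratedDeriv s f x‖ ^ 2 ≤ hsNormSq s f :=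
  le_add_of_nonneg_left (Finset.sum_nonneg fun _ _ => sq_nonneg _)

theorem norm_integral_iteratedDeriv_sq_le_hsNormSq {s ℓ : ℕ} (hℓ : ℓ < s) (f : ℝ → ℂ) :
    ‖∫ x in (0 : ℝ)..1, iteratedDeriv ℓ f x‖ ^ 2 ≤ hsNormSq s f :=
  (Finset.single_le_sum (f := fun ℓ => ‖∫ x in (0 : ℝ)..1, iteratedDeriv ℓ f x‖ ^ 2)
    (fun _ _ => sq_nonneg _) (Finset.mem_range.2 hℓ)).trans
    (le_add_of_nonneg_right (intervalIntegral.integral_nonneg zero_le_one fun _ _ => sq_nonneg _))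

theorem norm_integral_iteratedDeriv_le_sqrt_hsNormSq {s t : ℕ} {f : ℝ → ℂ} (hf : ContDiff ℝ s f)
    (ht : t ≤ s) : ‖∫ x in (0 : ℝ)..1, iteratedDeriv t f x‖ ≤ √(hsNormSq s f) := by
  rcases ht.lt_or_eq with ht | rfl
  · exact Real.le_sqrt_of_sq_le (norm_integral_iteratedDeriv_sq_le_hsNormSq ht f)
  · exact (norm_intervalIntegral_le_sqrt_integral_norm_sq (hf.continuous_iteratedDeriv' t)).trans
      (Real.sqrt_le_sqrt (integral_norm_sq_iteratedDeriv_le_hsNormSq t f))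

theorem norm_two_pi_I_mul_intCast (k : ℤ) : ‖(2 * π * I * k : ℂ)‖ = 2 * π * |(k : ℝ)| := by
  simp [abs_of_pos pi_pos]

theorem norm_Ik_iteratedDeriv_le_sqrt_hsNormSq {k : ℤ} (hk : k ≠ 0) {s t : ℕ} {f : ℝ → ℂ}
    (hf : ContDiff ℝ s f) (ht : t ≤ s) :
    ‖Ik k (iteratedDeriv t f)‖ ≤ √(hsNormSq s f) := by
  induction ht using Nat.decreasingInduction with
  | self =>
    exact (norm_Ik_le_sqrt_integral_norm_sq k (hf.continuous_iteratedDeriv' s)).trans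
      (Real.sqrt_le_sqrt (integral_norm_sq_iteratedDeriv_le_hsNormSq s f))
  | of_succ t hts ih =>
    have hf' : ContDiff ℝ (t + 1) f := hf.of_le (by exact_mod_cast hts)
    have hjump : ‖iteratedDeriv t f 1 - iteratedDeriv t f 0‖ ≤ √(hsNormSq s f) :=
      integral_iteratedDeriv_succ hf' ▸ norm_integral_iteratedDeriv_le_sqrt_hsNormSq hf hts
    have hc : 2 ≤ ‖(2 * π * I * k : ℂ)‖ := by
      rw [norm_two_pi_I_mul_intCast]
      have : (1 : ℝ) ≤ |(k : ℝ)| := by exact_mod_cast Int.one_le_abs hk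
      nlinarith [pi_gt_three]
    rw [Ik_iteratedDeriv_eq hk hf', norm_div, div_le_iff₀ (by linarith)]
    calc _ ≤ √(hsNormSq s f) + √(hsNormSq s f) := (norm_sub_le _ _).trans (add_le_add ih hjump)
      _ ≤ _ := by nlinarith [Real.sqrt_nonneg (hsNormSq s f)]

theorem stmt_16_general (s : ℕ) (j : ℕ) (hjs : j ≤ s)
    (k : ℤ) (hk : k ≠ 0) (f : ℝ → ℂ) (hf : ContDiff ℝ s f) :
    ‖Ik k f - Ik k (periodization f j)‖
        ≤ Real.sqrt (hsNormSq s f) / (2 * Real.pi * |(k : ℝ)|)^j ∧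
    Ik k (periodization f j) = -∑ ℓ ∈ Finset.range j,
        (iteratedDeriv ℓ f 1 - iteratedDeriv ℓ f 0) /
          (2 * Real.pi * Complex.I * (k : ℂ))^(ℓ+1) := by
  refine ⟨?_, Ik_periodization k f j⟩
  rw [Ik_eq_sum_add_Ik_iteratedDeriv hk (hf.of_le (by exact_mod_cast hjs)), Ik_periodization,
    add_sub_cancel_left, norm_div, norm_pow, norm_two_pi_I_mul_intCast]
  gcongr
  exact norm_Ik_iteratedDeriv_le_sqrt_hsNormSq hk hf hjs

/-- For `f ∈ Hˢ`, `k ≠ 0`, `1 ≤ j ≤ s`: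
`|I_k(f) - I_k(p_{f,j})| ≤ ‖f‖_{Hˢ}/(2π|k|)ʲ`, where
`I_k(p_{f,j}) = -∑_{ℓ<j}(f⁽ℓ⁾(1)-f⁽ℓ⁾(0))/(2πik)^{ℓ+1}`. -/
theorem stmt_16 (s : ℕ) (hs : 1 ≤ s) (j : ℕ) (hj1 : 1 ≤ j) (hjs : j ≤ s)
    (k : ℤ) (hk : k ≠ 0) (f : ℝ → ℂ) (hf : ContDiff ℝ s f) :
    ‖Ik k f - Ik k (periodization f j)‖
        ≤ Real.sqrt (hsNormSq s f) / (2 * Real.pi * |(k : ℝ)|)^j ∧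
    Ik k (periodization f j) = -∑ ℓ ∈ Finset.range j,
        (iteratedDeriv ℓ f 1 - iteratedDeriv ℓ f 0) /
          (2 * Real.pi * Complex.I * (k : ℂ))^(ℓ+1) :=
  stmt_16_general s j hjs k hk f hf
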